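/- Let w ∈ W̃_{D_m} and 0 ≤ k ≤ m, and suppose w satisfies (SP1') and (SP3') at k. Let α̃ := α̃_{i,j;d} be an affine root (j ∉ {i, i*}) such that s_{α̃}w satisfies (SP1') at k. Suppose that s_{α̃}w fails (SP3') at k and that ⟨α̃, a_k⟩ ∈ ℤ. Then ν_k^w ∈ ℤ^{2m}, ⟨α̃, a_k⟩ = ±1, ν_k^w(i) = ν_k^w(j) = 1, and c_k^w ≢ q (mod 2). -/

import Mathlib

open Finset

namespace TypeD

abbrev VecZ (m : ℕ) := Fin (2 * m) → ℤ
abbrev VecR (m : ℕ) := Fin (2 * m) → ℝ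

/-- `σ ∈ S_{2m}^∘`: even, and commuting with `j ↦ j*`. -/
def InSO (m : ℕ) (σ : Equiv.Perm (Fin (2 * m))) : Prop :=
  Equiv.Perm.sign σ = 1 ∧ ∀ j, σ j.rev = (σ j).rev

/-- `t ∈ X_{*D_m}`. -/
def InXD (m : ℕ) (t : VecZ m) : Prop :=
  ∀ j j' : Fin (2 * m), t j + t j.rev = t j' + t j'.rev

/-- `ω_i ∈ ℤ^{2m}`: writing `i = 2m·b + c` with `0 ≤ c < 2m`, the first `c` entries
are `-b-1` and the rest are `-b`. -/
def omegaD (m : ℕ) (i : ℤ) (j : Fin (2 * m)) : ℤ :=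
  if ((j : ℕ) : ℤ) < i % (2 * (m : ℤ)) then -(i / (2 * (m : ℤ))) - 1
  else -(i / (2 * (m : ℤ)))

/-- `μ_k^w = w·ω_k − ω_k` for `w = t_t σ`. -/
def muD (m : ℕ) (t : VecZ m) (σ : Equiv.Perm (Fin (2 * m))) (k : ℤ) (j : Fin (2 * m)) : ℤ :=
  t j + omegaD m k (σ⁻¹ j) - omegaD m k j

/-- `ν_k^w = (μ_k^w + μ_{−k}^w)/2`, real-valued. -/
noncomputable def nuD (m : ℕ) (t : VecZ m) (σ : Equiv.Perm (Fin (2 * m))) (k : ℤ) (j : Fin (2 * m)) : ℝ :=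
  ((muD m t σ k j + muD m t σ (-k) j : ℤ) : ℝ) / 2

/-- `c_k^w = #{j : μ_k^w(j) = 2}`. -/
noncomputable def cD (m : ℕ) (t : VecZ m) (σ : Equiv.Perm (Fin (2 * m))) (k : ℤ) : ℕ :=
  Set.ncard {j : Fin (2 * m) | muD m t σ k j = 2}

/-- the cocharacter `μ = (2^{(q)}, 1^{(2m−2q)}, 0^{(q)})`. -/
def muQ (m q : ℕ) (j : Fin (2 * m)) : ℤ :=
  if (j : ℕ) < q then 2 else if (j : ℕ) < 2 * m - q then 1 else 0

/-- the coroot lattice `Q∨_{D_m}`. -/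
def QveeD (m : ℕ) : Set (VecZ m) :=
  {x | (∀ j, x j + x j.rev = 0) ∧
    Even (∑ j ∈ Finset.univ.filter (fun j : Fin (2 * m) => (j : ℕ) < m), x j)}

/-- `j ∈ A_a` (1-indexed `{1,…,a} ∪ {2m+1−a,…,2m}`). -/
def memA (m a : ℕ) (j : Fin (2 * m)) : Prop := (j : ℕ) < a ∨ 2 * m - a ≤ (j : ℕ)

/-- `j ∈ B_a` (1-indexed `{a+1,…,2m−a}`). -/
def memB (m a : ℕ) (j : Fin (2 * m)) : Prop := a ≤ (j : ℕ) ∧ (j : ℕ) < 2 * m - a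

def IsIntVal (x : ℝ) : Prop := ∃ z : ℤ, x = (z : ℝ)

/-- a half-integer: an element of `(1/2)ℤ ∖ ℤ`. -/
def IsHalfInt (x : ℝ) : Prop := (∃ z : ℤ, x = (z : ℝ) / 2) ∧ ¬ IsIntVal x

/-- `μ_k^w` is self-dual, i.e. `μ_k^w = μ_{−k}^w`. -/
def SelfDual (m : ℕ) (t : VecZ m) (σ : Equiv.Perm (Fin (2 * m))) (k : ℤ) : Prop :=
  ∀ j, muD m t σ k j = muD m t σ (-k) j

/-- (SP1) at `k`. -/
def SP1 (m : ℕ) (t : VecZ m) (σ : Equiv.Perm (Fin (2 * m))) (k : ℤ) : Prop :=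
  (∀ j, muD m t σ k j + muD m t σ (-k) j.rev = 2) ∧
  (∀ j, 0 ≤ muD m t σ k j ∧ muD m t σ k j ≤ 2)

/-- (SP2) at `k`. -/
def SP2 (m q : ℕ) (t : VecZ m) (σ : Equiv.Perm (Fin (2 * m))) (k : ℤ) : Prop :=
  cD m t σ k ≤ q

/-- (SP3) at `k`. -/
def SP3 (m q : ℕ) (t : VecZ m) (σ : Equiv.Perm (Fin (2 * m))) (k : ℕ) : Prop :=
  (SelfDual m t σ (k : ℤ) ∧ (fun j => muD m t σ (k : ℤ) j - muQ m q j) ∉ QveeD m) →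
    ∃ j₁ j₂ : Fin (2 * m), memA m k j₁ ∧ memB m k j₂ ∧
      muD m t σ (k : ℤ) j₁ = 1 ∧ muD m t σ (k : ℤ) j₂ = 1

/-- (SP1') at `k`. -/
def SP1' (m : ℕ) (t : VecZ m) (σ : Equiv.Perm (Fin (2 * m))) (k : ℤ) : Prop :=
  (∀ j, nuD m t σ k j + nuD m t σ k j.rev = 2) ∧
  (∀ j, 0 ≤ nuD m t σ k j ∧ nuD m t σ k j ≤ 2)

/-- (SP2') at `k`. -/
def SP2' (m q : ℕ) (t : VecZ m) (σ : Equiv.Perm (Fin (2 * m))) (k : ℤ) : Prop :=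
  (Set.ncard {j : Fin (2 * m) | nuD m t σ k j = 2} : ℝ) +
    (Set.ncard {j : Fin (2 * m) | ¬ IsIntVal (nuD m t σ k j)} : ℝ) / 4 ≤ (q : ℝ)

/-- `ν_k^w − μ ∈ Q∨_{D_m}`. -/
def NuCongQvee (m q : ℕ) (t : VecZ m) (σ : Equiv.Perm (Fin (2 * m))) (k : ℤ) : Prop :=
  ∃ y ∈ QveeD m, ∀ j, nuD m t σ k j = ((muQ m q j + y j : ℤ) : ℝ)

/-- (SP3') at `k`. -/
def SP3' (m q : ℕ) (t : VecZ m) (σ : Equiv.Perm (Fin (2 * m))) (k : ℕ) : Prop :=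
  ((∀ j, IsIntVal (nuD m t σ (k : ℤ) j)) ∧ ¬ NuCongQvee m q t σ (k : ℤ)) →
    ∃ j₁ j₂ : Fin (2 * m), memA m k j₁ ∧ memB m k j₂ ∧
      nuD m t σ (k : ℤ) j₁ = 1 ∧ nuD m t σ (k : ℤ) j₂ = 1

/-- the orbit `S_{2m}^∘ · μ` inside `ℝ^{2m}`. -/
def OrbitMu (m q : ℕ) : Set (VecR m) :=
  {x | ∃ σ : Equiv.Perm (Fin (2 * m)), InSO m σ ∧ ∀ j, x j = ((muQ m q (σ⁻¹ j) : ℤ) : ℝ)}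

/-- `Conv(S_{2m}^∘ · μ)`. -/
def ConvMu (m q : ℕ) : Set (VecR m) := convexHull ℝ (OrbitMu m q)

/-- the affine action of `w = t_t σ` on `ℝ^{2m}`. -/
noncomputable def actR (m : ℕ) (t : VecZ m) (σ : Equiv.Perm (Fin (2 * m))) (x : VecR m) (j : Fin (2 * m)) : ℝ :=
  (t j : ℝ) + x (σ⁻¹ j)

/-- the point `a_k = ((−1/2)^{(k)}, 0^{(2m−2k)}, (1/2)^{(k)})`. -/
noncomputable def aD (m k : ℕ) (j : Fin (2 * m)) : ℝ :=
  if (j : ℕ) < k then -(1 / 2) else if (j : ℕ) < 2 * m - k then 0 else 1 / 2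

/-- the point `a_{0'} = (−1, 0^{(2m−2)}, 1)`. -/
noncomputable def a0' (m : ℕ) (j : Fin (2 * m)) : ℝ :=
  if (j : ℕ) = 0 then -1 else if (j : ℕ) = 2 * m - 1 then 1 else 0

/-- the point `a_{m'} = ((−1/2)^{(m−1)}, 1/2, −1/2, (1/2)^{(m−1)})`. -/
noncomputable def am' (m : ℕ) (j : Fin (2 * m)) : ℝ :=
  if (j : ℕ) < m - 1 then -(1 / 2)
  else if (j : ℕ) = m - 1 then 1 / 2
  else if (j : ℕ) = m then -(1 / 2)
  else 1 / 2

/-- `ν_{0'}^w = w·a_{0'} − a_{0'}`. -/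
noncomputable def nu0' (m : ℕ) (t : VecZ m) (σ : Equiv.Perm (Fin (2 * m))) (j : Fin (2 * m)) : ℝ :=
  actR m t σ (a0' m) j - a0' m j

/-- `ν_{m'}^w = w·a_{m'} − a_{m'}`. -/
noncomputable def num' (m : ℕ) (t : VecZ m) (σ : Equiv.Perm (Fin (2 * m))) (j : Fin (2 * m)) : ℝ :=
  actR m t σ (am' m) j - am' m j

/-- membership in the real apartment `{x : x(1)+x(2m) = ⋯ = x(m)+x(m+1)}`. -/
def InApartR (m : ℕ) (x : VecR m) : Prop :=
  ∀ j j' : Fin (2 * m), x j + x j.rev = x j' + x j'.rev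

/-- membership in the base alcove `A_{D_m}`. -/
def InAlcove (m : ℕ) (x : VecR m) : Prop :=
  InApartR m x ∧
  (∀ j0 jt : Fin (2 * m), (j0 : ℕ) = 0 → 1 ≤ (jt : ℕ) → (jt : ℕ) ≤ m →
    x j0 < x jt ∧ x j0.rev - 1 < x jt) ∧
  (∀ j j' : Fin (2 * m), 1 ≤ (j : ℕ) → (j : ℕ) ≤ m - 2 → (j : ℕ) < (j' : ℕ) →
    (j' : ℕ) ≤ m → x j < x j')

/-- `w = t_t σ` is μ-permissible: `w ≡ t_μ mod W_{aff}` (equivalently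
`ν_0^w − μ ∈ Q∨_{D_m}`) and `w·x − x ∈ Conv(S_{2m}^∘ μ)` for all `x` in the base alcove. -/
def MuPermissible (m q : ℕ) (t : VecZ m) (σ : Equiv.Perm (Fin (2 * m))) : Prop :=
  NuCongQvee m q t σ 0 ∧
  ∀ x : VecR m, InAlcove m x → (fun j => actR m t σ x j - x j) ∈ ConvMu m q

/-- the coroot `α∨_{i,j} = e_i − e_j + e_{j*} − e_{i*}`. -/
def corootD (m : ℕ) (i j l : Fin (2 * m)) : ℤ :=
  (if l = i then 1 else 0) - (if l = j then 1 else 0) +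
    (if l = j.rev then 1 else 0) - (if l = i.rev then 1 else 0)

/-- `(t', σ')` represents `s_{α̃_{i,j;d}} · w` for `w = t_t σ`: on the apartment it
acts by `x ↦ w·x − ⟨α̃_{i,j;d}, w·x⟩ α∨_{i,j}`. -/
def IsReflOf (m : ℕ) (i j : Fin (2 * m)) (d : ℤ) (t : VecZ m) (σ : Equiv.Perm (Fin (2 * m)))
    (t' : VecZ m) (σ' : Equiv.Perm (Fin (2 * m))) : Prop :=
  ∀ x : VecR m, InApartR m x → ∀ l,
    actR m t' σ' x l =
      actR m t σ x l - (actR m t σ x i - actR m t σ x j - (d : ℝ)) * (corootD m i j l : ℝ)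

/-- Membership of `i` in `2mℤ ± I`. -/
def FaceIdxD (m : ℕ) (I : Finset ℕ) (i : ℤ) : Prop :=
  ∃ a ∈ I, ∃ b : ℤ, i = 2 * (m : ℤ) * b + (a : ℤ) ∨ i = 2 * (m : ℤ) * b - (a : ℤ)

/-- `v` is a `d`-face of type `(2m, I)`. -/
structure IsFaceD (m : ℕ) (I : Finset ℕ) (d : ℤ) (v : ℤ → VecZ m) : Prop where
  per : ∀ i, FaceIdxD m I i → ∀ j, v (i + 2 * (m : ℤ)) j = v i j - 1
  mono : ∀ i i', FaceIdxD m I i → FaceIdxD m I i' → i ≤ i' → ∀ j, v i' j ≤ v i j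
  sumEq : ∀ i i', FaceIdxD m I i → FaceIdxD m I i' → (∑ j, v i j) - (∑ j, v i' j) = i' - i
  dual : ∀ i, FaceIdxD m I i → ∀ j, v i j + v (-i) j.rev = d

/-- `μ_i^v := v_i − ω_i` for a face `v`. -/
def muFaceD (m : ℕ) (v : ℤ → VecZ m) (i : ℤ) (j : Fin (2 * m)) : ℤ := v i j - omegaD m i j

/-- `ε` of a translation vector: the sum of the first `m` entries mod 2. -/
def epsVec (m : ℕ) (x : VecZ m) : ZMod 2 :=
  ((∑ j ∈ Finset.univ.filter (fun j : Fin (2 * m) => (j : ℕ) < m), x j : ℤ) : ZMod 2)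

/-- membership of `(v, γ)` in `F_{I,D_m}`. -/
def MemFD (m : ℕ) (I : Finset ℕ) (v : ℤ → VecZ m) (γ : ZMod 2) : Prop :=
  (∃ d, IsFaceD m I d v) ∧
  (if 0 ∈ I then
    if m ∈ I then
      (fun j => muFaceD m v 0 j - muFaceD m v (m : ℤ) j) ∈ QveeD m ∧
        γ = epsVec m (fun j => muFaceD m v 0 j)
    else γ = epsVec m (fun j => muFaceD m v 0 j)
  else if m ∈ I then γ = epsVec m (fun j => muFaceD m v (m : ℤ) j)
  else True)

/-- membership of `t_tx σx` in `W_{I,D_m}` (the group conditions on `(tx, σx)` being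
assumed separately): it lies in `W_{aff,D_m}` and fixes `a_k` for all `k ∈ I`. -/
def MemWI (m : ℕ) (I : Finset ℕ) (tx : VecZ m) (σx : Equiv.Perm (Fin (2 * m))) : Prop :=
  tx ∈ QveeD m ∧ ∀ k ∈ I, ∀ j, (tx j : ℝ) + aD m k (σx⁻¹ j) = aD m k j

/-- (SP1) at `k` for a face. -/
def SP1F (m : ℕ) (v : ℤ → VecZ m) (k : ℕ) : Prop :=
  (∀ j, muFaceD m v (k : ℤ) j + muFaceD m v (-(k : ℤ)) j.rev = 2) ∧
  (∀ j, 0 ≤ muFaceD m v (k : ℤ) j ∧ muFaceD m v (k : ℤ) j ≤ 2)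

/-- (SP2) at `k` for a face. -/
def SP2F (m q : ℕ) (v : ℤ → VecZ m) (k : ℕ) : Prop :=
  Set.ncard {j : Fin (2 * m) | muFaceD m v (k : ℤ) j = 2} ≤ q

/-- (SP3) at `k` for a face. -/
def SP3F (m q : ℕ) (v : ℤ → VecZ m) (k : ℕ) : Prop :=
  ((∀ j, muFaceD m v (k : ℤ) j = muFaceD m v (-(k : ℤ)) j) ∧
      (fun j => muFaceD m v (k : ℤ) j - muQ m q j) ∉ QveeD m) →
    ∃ j₁ j₂ : Fin (2 * m), memA m k j₁ ∧ memB m k j₂ ∧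
      muFaceD m v (k : ℤ) j₁ = 1 ∧ muFaceD m v (k : ℤ) j₂ = 1

/-- `(v, γ) ∈ F_{I,D_m}` is μ-spin-permissible. -/
def SpinPermF (m q : ℕ) (I : Finset ℕ) (v : ℤ → VecZ m) (γ : ZMod 2) : Prop :=
  γ = epsVec m (fun j => muQ m q j) ∧ ∀ k ∈ I, SP1F m v k ∧ SP2F m q v k ∧ SP3F m q v k

/-!
Write `ν = ν_k^w` and `ν' = ν_k^{s w}`. On the apartment, `ν' = ν - ⟨α̃, w·a_k⟩ α∨_{i,j}`, and
evaluating at `i` and `j` shows that the coefficient is `ν'(j) - ν'(i) - ⟨α̃, a_k⟩ ∈ ℤ`. Hence `ν`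
is integral together with `ν'`, and `ν ≡ ν'` modulo `Q∨`, so (SP3') for `w` yields a pair
`j₁ ∈ A_k`, `j₂ ∈ B_k` with `ν = 1` there, while `ν'` has no such pair. Integrality of `⟨α̃, a_k⟩`
puts `{i, j, i*, j*}` entirely inside `A_k` or inside `B_k`, so the pair can only be destroyed at
`i` or `j`; the bounds `0 ≤ ν, ν' ≤ 2` then force `ν(i) = ν(j) = 1` and `⟨α̃, a_k⟩ = ±1`.
Finally, an integral `ν` equals `μ_k^w`, and a parity count over the pairs `{l, l*}` shows
`ν - μ ∈ Q∨` as soon as `c_k^w ≡ q (mod 2)`, which is excluded.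
-/

def qveeSubgroup (m : ℕ) : AddSubgroup (VecZ m) where
  carrier := QveeD m
  add_mem' := by
    rintro x y ⟨hx, hx'⟩ ⟨hy, hy'⟩
    refine ⟨fun l => by simp only [Pi.add_apply]; linear_combination hx l + hy l, ?_⟩
    simpa only [Pi.add_apply, sum_add_distrib] using hx'.add hy'
  zero_mem' := ⟨fun _ => by simp, by simp⟩
  neg_mem' := by
    rintro x ⟨hx, hx'⟩
    exact ⟨fun l => by simp only [Pi.neg_apply]; linear_combination -hx l,
      by simpa only [Pi.neg_apply, sum_neg_distrib, even_neg] using hx'⟩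

/-- The conclusion of (SP3') for an integral `ν = N`. -/
def HasUnitPair (m k : ℕ) (N : VecZ m) : Prop :=
  ∃ j₁ j₂, memA m k j₁ ∧ memB m k j₂ ∧ N j₁ = 1 ∧ N j₂ = 1

section Development

variable {m : ℕ} {i j : Fin (2 * m)} {d : ℤ} {t t' : VecZ m} {σ σ' : Equiv.Perm (Fin (2 * m))}

instance (k : ℕ) : DecidablePred (memA m k) := fun x => by
  unfold memA; infer_instance

lemma rev_ne_self (x : Fin (2 * m)) : x.rev ≠ x := by
  intro h
  have := congrArg Fin.val h
  rw [Fin.val_rev] at this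
  omega

lemma omegaD_natCast {k : ℕ} (hk : k < 2 * m) (x : Fin (2 * m)) :
    omegaD m k x = if (x : ℕ) < k then -1 else 0 := by
  have h1 : (k : ℤ) % (2 * (m : ℤ)) = k := Int.emod_eq_of_lt (by positivity) (by omega)
  have h2 : (k : ℤ) / (2 * (m : ℤ)) = 0 := Int.ediv_eq_zero_of_lt (by positivity) (by omega)
  simp only [omegaD, h1, h2]
  split_ifs <;> omega

lemma omegaD_neg_natCast {k : ℕ} (hk : k < 2 * m) (x : Fin (2 * m)) :
    omegaD m (-k) x = if (x : ℕ) < 2 * m - k then 0 else 1 := by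
  obtain rfl | hpos := Nat.eq_zero_or_pos k
  · simp [omegaD]
  have he : -(k : ℤ) = ((2 * m - k : ℕ) : ℤ) + 2 * (m : ℤ) * (-1) := by
    push_cast [Nat.cast_sub hk.le]; ring
  have h1 : -(k : ℤ) % (2 * (m : ℤ)) = ((2 * m - k : ℕ) : ℤ) := by
    rw [he, Int.add_mul_emod_self_left, Int.emod_eq_of_lt (by positivity) (by omega)]
  have h2 : -(k : ℤ) / (2 * (m : ℤ)) = -1 := by
    rw [he, Int.add_mul_ediv_left _ _ (by omega), Int.ediv_eq_zero_of_lt (by positivity) (by omega)]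
    ring
  simp only [omegaD, h1, h2]
  split_ifs <;> omega

lemma two_mul_aD {k : ℕ} (hk : k ≤ m) (x : Fin (2 * m)) :
    2 * aD m k x = ((omegaD m k x + omegaD m (-k) x : ℤ) : ℝ) := by
  have := x.isLt
  rw [omegaD_natCast (by omega), omegaD_neg_natCast (by omega)]
  unfold aD
  split_ifs <;> first | (exfalso; omega) | norm_num

lemma omegaD_sub_omegaD_neg {k : ℕ} (hk : k ≤ m) (x : Fin (2 * m)) :
    omegaD m k x - omegaD m (-k) x = if memA m k x then -1 else 0 := by
  have := x.isLt
  rw [omegaD_natCast (by omega), omegaD_neg_natCast (by omega)]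
  unfold memA
  split_ifs <;> omega

lemma aD_add_aD_rev {k : ℕ} (hk : k ≤ m) (x : Fin (2 * m)) : aD m k x + aD m k x.rev = 0 := by
  have := x.isLt
  have := Fin.val_rev x
  unfold aD
  split_ifs <;> first | (exfalso; omega) | norm_num

lemma aD_mem_apartR {k : ℕ} (hk : k ≤ m) : InApartR m (aD m k) := fun x y => by
  rw [aD_add_aD_rev hk, aD_add_aD_rev hk]

lemma nuD_eq_actR_sub {k : ℕ} (hk : k ≤ m) (l : Fin (2 * m)) :
    nuD m t σ k l = actR m t σ (aD m k) l - aD m k l := by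
  have h₁ := two_mul_aD hk (σ⁻¹ l)
  have h₂ := two_mul_aD hk l
  unfold nuD muD actR
  push_cast at h₁ h₂ ⊢
  linarith

/-- `ν_k^w(l)` and `μ_k^w(l)` differ by half of `μ_k^w(l) - μ_{-k}^w(l) ∈ {-1, 0, 1}`. -/
lemma muD_eq_of_nuD_eq_intCast {k : ℕ} (hk : k ≤ m) {l : Fin (2 * m)} {n : ℤ}
    (h : nuD m t σ k l = n) : muD m t σ k l = n := by
  have hsum : muD m t σ k l + muD m t σ (-k) l = 2 * n := by
    unfold nuD at h
    push_cast at h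
    rify
    linarith
  have hdiff : muD m t σ k l - muD m t σ (-k) l =
      (omegaD m k (σ⁻¹ l) - omegaD m (-k) (σ⁻¹ l)) - (omegaD m k l - omegaD m (-k) l) := by
    unfold muD; ring
  rw [omegaD_sub_omegaD_neg hk, omegaD_sub_omegaD_neg hk] at hdiff
  split_ifs at hdiff <;> omega

lemma memA_rev {k : ℕ} (x : Fin (2 * m)) : memA m k x.rev ↔ memA m k x := by
  have := x.isLt
  simp only [memA, Fin.val_rev]
  omega

lemma memB_iff_not_memA {k : ℕ} (x : Fin (2 * m)) : memB m k x ↔ ¬ memA m k x := by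
  unfold memA memB
  omega

lemma memA_iff_of_aD_sub_aD_eq_intCast {k : ℕ} (hk : k ≤ m) {x y : Fin (2 * m)} {n : ℤ}
    (h : aD m k x - aD m k y = n) : memA m k x ↔ memA m k y := by
  have h₂ : (omegaD m k x + omegaD m (-k) x) - (omegaD m k y + omegaD m (-k) y) = 2 * n := by
    have hx := two_mul_aD hk x
    have hy := two_mul_aD hk y
    push_cast at hx hy
    rify
    linarith
  have hx := omegaD_sub_omegaD_neg hk x
  have hy := omegaD_sub_omegaD_neg hk y
  split_ifs at hx hy <;> simp only [*] <;> omega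

lemma corootD_left (hji : j ≠ i) (hjir : j ≠ i.rev) : corootD m i j i = 1 := by
  have hijr : i ≠ j.rev := fun h => hjir (by rw [h, Fin.rev_rev])
  simp [corootD, hji.symm, hijr, (rev_ne_self i).symm]

lemma corootD_right (hji : j ≠ i) (hjir : j ≠ i.rev) : corootD m i j j = -1 := by
  simp [corootD, hji, hjir, (rev_ne_self j).symm]

lemma corootD_eq_zero {l : Fin (2 * m)} (hi : l ≠ i) (hj : l ≠ j) (hir : l ≠ i.rev)
    (hjr : l ≠ j.rev) : corootD m i j l = 0 := by
  simp [corootD, hi, hj, hir, hjr]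

lemma corootD_mem_QveeD (i j : Fin (2 * m)) : corootD m i j ∈ QveeD m := by
  refine ⟨fun l => ?_, ?_⟩
  · simp only [corootD, Fin.rev_eq_iff, Fin.rev_rev]
    split_ifs <;> omega
  · rw [Int.even_iff]
    simp only [corootD, sum_sub_distrib, sum_add_distrib, sum_ite_eq', mem_filter, mem_univ,
      true_and]
    have := Fin.val_rev i
    have := Fin.val_rev j
    have := i.isLt
    split_ifs <;> omega

lemma NuCongQvee.of_eq_add {q : ℕ} {k k' : ℤ} {x : VecZ m} (hx : x ∈ QveeD m)
    (h : ∀ l, nuD m t' σ' k' l = nuD m t σ k l + x l) (hw : NuCongQvee m q t σ k) :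
    NuCongQvee m q t' σ' k' := by
  obtain ⟨y, hy, hyν⟩ := hw
  refine ⟨y + x, (qveeSubgroup m).add_mem hy hx, fun l => ?_⟩
  rw [h, hyν, Pi.add_apply]
  push_cast
  ring

lemma nuD_of_isReflOf {k : ℕ} (h : IsReflOf m i j d t σ t' σ') (hk : k ≤ m) (l : Fin (2 * m)) :
    nuD m t' σ' k l = nuD m t σ k l -
      (nuD m t σ k i - nuD m t σ k j + (aD m k i - aD m k j - d)) * corootD m i j l := by
  simp only [nuD_eq_actR_sub hk, h (aD m k) (aD_mem_apartR hk) l]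
  ring

/-- The reflection coefficient `⟨α̃, w·a_k⟩` equals `ν_k^{s w}(j) - ν_k^{s w}(i) - ⟨α̃, a_k⟩`. -/
lemma nuD_eq_intCast_of_isReflOf {k : ℕ} (h : IsReflOf m i j d t σ t' σ') (hk : k ≤ m)
    (hji : j ≠ i) (hjir : j ≠ i.rev) {z : ℤ} (hz : aD m k i - aD m k j - d = z) {N' : VecZ m}
    (hN' : ∀ l, nuD m t' σ' k l = N' l) (l : Fin (2 * m)) :
    nuD m t σ k l = ((N' l + (N' j - N' i - z) * corootD m i j l : ℤ) : ℝ) := by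
  have hi := nuD_of_isReflOf h hk i
  have hj := nuD_of_isReflOf h hk j
  have hl := nuD_of_isReflOf h hk l
  rw [hz, corootD_left hji hjir, hN'] at hi
  rw [hz, corootD_right hji hjir, hN'] at hj
  rw [hz, hN'] at hl
  push_cast at hi hj ⊢
  linear_combination -hl + (corootD m i j l : ℝ) * (hi - hj)

lemma exists_apply_eq_and_forall_ne_of_no_pair {ι α : Type*} {p P : ι → Prop} {v v' : ι → α}
    {a : α} (hP : ∀ x, P x → p x) (hoff : ∀ x, ¬ P x → v' x = v x) {x₁ x₂ : ι} (h₁ : p x₁)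
    (h₂ : ¬ p x₂) (hv₁ : v x₁ = a) (hv₂ : v x₂ = a)
    (hno : ∀ x y, p x → ¬ p y → v' x = a → v' y ≠ a) :
    (∃ x, P x ∧ v x = a) ∧ ∀ x, P x → v' x ≠ a := by
  have hv₂' : v' x₂ = a := (hoff x₂ fun h => h₂ (hP x₂ h)).trans hv₂
  refine ⟨⟨x₁, ?_, hv₁⟩, fun x hx hx' => hno x x₂ (hP x hx) h₂ hx' hv₂'⟩
  by_contra hx₁
  exact hno x₁ x₂ h₁ h₂ ((hoff x₁ hx₁).trans hv₁) hv₂'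

/-- `N` and `N'` agree off `{i, j, i*, j*}`, a set lying entirely in `A_k` or entirely in `B_k`;
so the pair of `N` can only be destroyed at `i` or `j`. -/
lemma eq_one_of_hasUnitPair_of_not_hasUnitPair (hji : j ≠ i) (hjir : j ≠ i.rev) {k : ℕ} {z : ℤ}
    (hA : memA m k i ↔ memA m k j) {N N' : VecZ m}
    (hN : ∀ l, N l = N' l + (N' j - N' i - z) * corootD m i j l)
    (hsum : ∀ l, N l + N l.rev = 2) (hbd : ∀ l, 0 ≤ N l ∧ N l ≤ 2)
    (hbd' : ∀ l, 0 ≤ N' l ∧ N' l ≤ 2) (hpair : HasUnitPair m k N)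
    (hpair' : ¬ HasUnitPair m k N') : (z = 1 ∨ z = -1) ∧ N i = 1 ∧ N j = 1 := by
  have hi : N i = N' j - z := by rw [hN, corootD_left hji hjir]; ring
  have hj : N j = N' i + z := by rw [hN, corootD_right hji hjir]; ring
  set P : Fin (2 * m) → Prop := fun l => l = i ∨ l = j ∨ l = i.rev ∨ l = j.rev with hP
  have hoff : ∀ l, ¬ P l → N' l = N l := fun l hl => by
    simp only [hP, not_or] at hl
    rw [hN, corootD_eq_zero hl.1 hl.2.1 hl.2.2.1 hl.2.2.2]
    ring
  obtain ⟨j₁, j₂, h₁, h₂, hv₁, hv₂⟩ := hpair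
  have hno : ∀ x y, memA m k x → memB m k y → N' x = 1 → N' y ≠ 1 :=
    fun x y hx hy hx' hy' => hpair' ⟨x, y, hx, hy, hx', hy'⟩
  have hPN : (∃ l, P l ∧ N l = 1) ∧ ∀ l, P l → N' l ≠ 1 := by
    by_cases hAi : memA m k i
    · refine exists_apply_eq_and_forall_ne_of_no_pair ?_ hoff h₁ ((memB_iff_not_memA _).1 h₂)
        hv₁ hv₂ fun x y hx hy => hno x y hx ((memB_iff_not_memA _).2 hy)
      rintro l (rfl | rfl | rfl | rfl) <;> simp [memA_rev, hAi, ← hA]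
    · refine exists_apply_eq_and_forall_ne_of_no_pair ?_ hoff h₂
        (by rwa [memB_iff_not_memA, not_not]) hv₂ hv₁ fun x y hx hy hx' hy' =>
          hno y x (by rwa [memB_iff_not_memA, not_not] at hy) hx hy' hx'
      rintro l (rfl | rfl | rfl | rfl) <;> simp [memB_iff_not_memA, memA_rev, hAi, ← hA]
  obtain ⟨⟨l, hl, hl1⟩, hne⟩ := hPN
  have hi' := hne i (Or.inl rfl)
  have hj' := hne j (Or.inr (Or.inl rfl))
  have hone : N i = 1 ∨ N j = 1 := by
    rcases hl with rfl | rfl | rfl | rfl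
    · exact Or.inl hl1
    · exact Or.inr hl1
    · left; linarith [hsum i]
    · right; linarith [hsum j]
  have := hbd i; have := hbd j; have := hbd' i; have := hbd' j
  omega

lemma sum_eq_sum_filter_lt_add_rev {M : Type*} [AddCommMonoid M] (g : Fin (2 * m) → M) :
    ∑ l, g l = ∑ l ∈ univ.filter (fun l : Fin (2 * m) => (l : ℕ) < m), (g l + g l.rev) := by
  rw [sum_add_distrib, ← sum_filter_add_sum_filter_not univ (fun l : Fin (2 * m) => (l : ℕ) < m)]
  congr 1
  refine sum_nbij' Fin.rev Fin.rev ?_ ?_ (fun a _ => Fin.rev_rev a) (fun a _ => Fin.rev_rev a)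
    (fun a _ => by rw [Fin.rev_rev])
  all_goals
    intro a ha
    simp only [mem_filter, mem_univ, true_and, Fin.val_rev, not_lt] at ha ⊢
    omega

lemma muQ_add_muQ_rev {q : ℕ} (hq : q ≤ m) (x : Fin (2 * m)) : muQ m q x + muQ m q x.rev = 2 := by
  have := x.isLt
  have := Fin.val_rev x
  unfold muQ
  split_ifs <;> omega

lemma sum_muQ {q : ℕ} (hq : q ≤ m) :
    ∑ l ∈ univ.filter (fun l : Fin (2 * m) => (l : ℕ) < m), muQ m q l = m + q := by
  have h : ∀ l ∈ ({l | (l : ℕ) < m} : Finset (Fin (2 * m))),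
      muQ m q l = 1 + if (l : ℕ) < q then 1 else 0 := by
    intro l hl
    simp only [mem_filter, mem_univ, true_and] at hl
    unfold muQ
    split_ifs <;> omega
  rw [sum_congr rfl h, sum_add_distrib, sum_const, sum_boole, filter_filter]
  have hq' : ∀ l : Fin (2 * m), (l : ℕ) < m ∧ (l : ℕ) < q ↔ (l : ℕ) < q := fun l => by omega
  simp only [hq', Fin.card_filter_val_lt, nsmul_eq_mul, mul_one]
  omega

/-- For each pair `{l, l*}` with `l < m`, `N l + #{x ∈ {l, l*} | N x = 2}` is odd. -/
lemma sub_muQ_mem_QveeD {q : ℕ} (hq : q ≤ m) {N : VecZ m} (hsum : ∀ l, N l + N l.rev = 2)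
    (hbd : ∀ l, 0 ≤ N l ∧ N l ≤ 2) (hc : #{l | N l = 2} % 2 = q % 2) :
    (fun l => N l - muQ m q l) ∈ QveeD m := by
  refine ⟨fun l => by linarith [hsum l, muQ_add_muQ_rev hq l], ?_⟩
  have hcard : (#{l | N l = 2} : ℤ) = ∑ l ∈ univ.filter (fun l : Fin (2 * m) => (l : ℕ) < m),
      ((if N l = 2 then 1 else 0) + if N l.rev = 2 then 1 else 0) := by
    rw [← sum_eq_sum_filter_lt_add_rev fun l => if N l = 2 then (1 : ℤ) else 0, sum_boole]
  have hpar : Even (∑ l ∈ univ.filter (fun l : Fin (2 * m) => (l : ℕ) < m),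
      (N l + ((if N l = 2 then 1 else 0) + if N l.rev = 2 then 1 else 0) + 1)) := by
    refine even_sum _ fun l _ => Int.even_iff.2 ?_
    have := hsum l; have := hbd l; have := hbd l.rev
    split_ifs <;> omega
  rw [sum_add_distrib, sum_add_distrib, ← hcard, sum_const, Fin.card_filter_val_lt] at hpar
  rw [sum_sub_distrib, sum_muQ hq]
  rw [Int.even_iff] at hpar ⊢
  simp only [nsmul_eq_mul, mul_one] at hpar
  omega

lemma SP1'.intCast_bounds {k : ℤ} {N : VecZ m} (h : SP1' m t σ k) (hN : ∀ l, nuD m t σ k l = N l) :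
    (∀ l, N l + N l.rev = 2) ∧ ∀ l, 0 ≤ N l ∧ N l ≤ 2 := by
  refine ⟨fun l => ?_, fun l => ?_⟩
  · have := h.1 l
    rw [hN, hN] at this
    exact_mod_cast this
  · have := h.2 l
    rw [hN] at this
    exact_mod_cast this

lemma cD_eq_card {k : ℕ} {N : VecZ m} (hk : k ≤ m) (hN : ∀ l, nuD m t σ k l = N l) :
    cD m t σ k = #{l | N l = 2} := by
  simp only [cD, muD_eq_of_nuD_eq_intCast hk (hN _)]
  rw [Set.ncard_eq_toFinset_card', Set.toFinset_ofPred]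

end Development

theorem statement15_general (m q : ℕ) (hq : q ≤ m - 1)
    (t : VecZ m) (σ : Equiv.Perm (Fin (2 * m)))
    (i j : Fin (2 * m)) (hji : j ≠ i) (hjir : j ≠ i.rev) (d : ℤ)
    (t' : VecZ m) (σ' : Equiv.Perm (Fin (2 * m)))
    (hrefl : IsReflOf m i j d t σ t' σ')
    (k : ℕ) (hk : k ≤ m)
    (hw1 : SP1' m t σ (k : ℤ)) (hw3 : SP3' m q t σ k)
    (hs1 : SP1' m t' σ' (k : ℤ)) (hs3 : ¬ SP3' m q t' σ' k)
    (hint : IsIntVal (aD m k i - aD m k j - (d : ℝ))) :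
    (∀ l, IsIntVal (nuD m t σ (k : ℤ) l)) ∧
    (aD m k i - aD m k j - (d : ℝ) = 1 ∨ aD m k i - aD m k j - (d : ℝ) = -1) ∧
    nuD m t σ (k : ℤ) i = 1 ∧ nuD m t σ (k : ℤ) j = 1 ∧
    cD m t σ (k : ℤ) % 2 ≠ q % 2 := by
  obtain ⟨z, hz⟩ := hint
  obtain ⟨⟨hint', hncong'⟩, hpair'⟩ := Classical.not_imp.1 hs3
  choose N' hN' using hint'
  set c := N' j - N' i - z
  set N : VecZ m := fun l => N' l + c * corootD m i j l
  have hN : ∀ l, nuD m t σ k l = N l := nuD_eq_intCast_of_isReflOf hrefl hk hji hjir hz hN'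
  have hncong : ¬ NuCongQvee m q t σ k := fun h => hncong' <|
    h.of_eq_add ((qveeSubgroup m).zsmul_mem (corootD_mem_QveeD i j) (-c)) fun l => by
      simp only [hN, hN', N, Pi.smul_apply, smul_eq_mul]
      push_cast
      ring
  have hpair : HasUnitPair m k N := by
    simpa [HasUnitPair, hN] using hw3 ⟨fun l => ⟨N l, hN l⟩, hncong⟩
  obtain ⟨hsum, hbd⟩ := hw1.intCast_bounds hN
  have hA : memA m k i ↔ memA m k j :=
    memA_iff_of_aD_sub_aD_eq_intCast hk (n := z + d) (by push_cast; linarith)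
  obtain ⟨hz1, hi, hj⟩ := eq_one_of_hasUnitPair_of_not_hasUnitPair hji hjir hA (fun _ => rfl)
    hsum hbd (hs1.intCast_bounds hN').2 hpair (by simpa [HasUnitPair, hN'] using hpair')
  refine ⟨fun l => ⟨N l, hN l⟩, by rw [hz]; exact_mod_cast hz1, by rw [hN]; exact_mod_cast hi,
    by rw [hN]; exact_mod_cast hj, fun hc => hncong ?_⟩
  rw [cD_eq_card hk hN] at hc
  exact ⟨fun l => N l - muQ m q l, sub_muQ_mem_QveeD (by omega) hsum hbd hc,
    fun l => by rw [hN]; push_cast; ring⟩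

theorem statement15 (m q : ℕ) (hm : 2 ≤ m) (hq : q ≤ m - 1)
    (t : VecZ m) (σ : Equiv.Perm (Fin (2 * m))) (ht : InXD m t) (hσ : InSO m σ)
    (i j : Fin (2 * m)) (hji : j ≠ i) (hjir : j ≠ i.rev) (d : ℤ)
    (t' : VecZ m) (σ' : Equiv.Perm (Fin (2 * m))) (ht' : InXD m t') (hσ' : InSO m σ')
    (hrefl : IsReflOf m i j d t σ t' σ')
    (k : ℕ) (hk : k ≤ m)
    (hw1 : SP1' m t σ (k : ℤ)) (hw3 : SP3' m q t σ k)
    (hs1 : SP1' m t' σ' (k : ℤ)) (hs3 : ¬ SP3' m q t' σ' k)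
    (hint : IsIntVal (aD m k i - aD m k j - (d : ℝ))) :
    (∀ l, IsIntVal (nuD m t σ (k : ℤ) l)) ∧
    (aD m k i - aD m k j - (d : ℝ) = 1 ∨ aD m k i - aD m k j - (d : ℝ) = -1) ∧
    nuD m t σ (k : ℤ) i = 1 ∧ nuD m t σ (k : ℤ) j = 1 ∧
    cD m t σ (k : ℤ) % 2 ≠ q % 2 :=
  statement15_general m q hq t σ i j hji hjir d t' σ' hrefl k hk hw1 hw3 hs1 hs3 hint

end TypeD
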